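/- arXiv:1412.6520 — 2 statements merged into one kernel-verified Lean document; each statement's English description precedes it below -/
import Mathlib

section
/- Fix a band index set b = 1,…,B. For each b, the function g(ρ | ρ̃) = Σ_{b=1}^B [ f_b(ρ̃_b) + f_b'(ρ̃_b)(ρ_b − ρ̃_b) + (L_b/2)(ρ_b − ρ̃_b)² ] majorizes Σ_{b=1}^B f_b(ρ_b) at the point ρ̃ ∈ ℝ^B; that is, g(ρ̃ | ρ̃) = Σ_{b=1}^B f_b(ρ̃_b) and g(ρ | ρ̃) ≥ Σ_{b=1}^B f_b(ρ_b) for all ρ ∈ ℝ^B, where L_b = a_b ( a_b κ_b + √(n_b) · ‖W_b μ_b‖₂ ), κ_b = Σ_{i=1}^{n_b} w_{bi}, and ‖W_b μ_b‖₂ = sqrt( Σ_{i=1}^{n_b} (w_{bi} μ_{bi})² ). -/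
/-!
Each band is handled separately. Writing `θᵢ = ω tᵢ + ρ`, the second derivative of `f_b` is
`Σ wᵢ (a² cos² θᵢ - (a sin θᵢ - μᵢ) a sin θᵢ) ≤ Σ wᵢ (a² + a |μᵢ|) = a² κ + a ‖W μ‖₁`, and
Cauchy–Schwarz gives `‖W μ‖₁ ≤ √n ‖W μ‖₂`, so `f_b'' ≤ L_b`. Hence the tangent parabola of
curvature `L_b` at any point, minus `f_b`, is convex with a critical point there, so it is
nonnegative. Summing over the bands gives the majorization, with equality at `ρ₀` since the
linear and quadratic terms vanish there.
-/

open Finset Real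

theorem sum_abs_le_sqrt_card_mul_sqrt_sum_sq {ι : Type*} [Fintype ι] (x : ι → ℝ) :
    ∑ i, |x i| ≤ √(Fintype.card ι) * √(∑ i, x i ^ 2) := by
  simpa using Real.sum_mul_le_sqrt_mul_sqrt univ (fun _ ↦ 1) (fun i ↦ |x i|)

theorem le_add_mul_sub_add_sq_of_hasDerivAt2_le {f f' f'' : ℝ → ℝ} {L : ℝ}
    (hf : ∀ x, HasDerivAt f (f' x) x) (hf' : ∀ x, HasDerivAt f' (f'' x) x)
    (hf'' : ∀ x, f'' x ≤ L) (x y : ℝ) :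
    f y ≤ f x + f' x * (y - x) + L / 2 * (y - x) ^ 2 := by
  set φ : ℝ → ℝ := fun z ↦ f x + f' x * (z - x) + L / 2 * (z - x) ^ 2 - f z
  set φ' : ℝ → ℝ := fun z ↦ f' x + L * (z - x) - f' z
  have hφ (z : ℝ) : HasDerivAt φ (φ' z) z := by
    have := ((((hasDerivAt_id' z).sub_const x).const_mul (f' x)).const_add (f x)).fun_add
      ((((hasDerivAt_id' z).sub_const x).fun_pow 2).const_mul (L / 2)) |>.fun_sub (hf z)
    refine this.congr_deriv ?_
    simp only [φ']; norm_num; ring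
  have hφ' (z : ℝ) : HasDerivAt φ' (L - f'' z) z := by
    have := ((((hasDerivAt_id z).sub_const x).const_mul L).const_add (f' x)).fun_sub (hf' z)
    simpa using this
  have hconv : ConvexOn ℝ Set.univ φ :=
    convexOn_of_hasDerivWithinAt2_nonneg convex_univ
      (fun z _ ↦ (hφ z).continuousAt.continuousWithinAt) (fun z _ ↦ (hφ z).hasDerivWithinAt)
      (fun z _ ↦ (hφ' z).hasDerivWithinAt) (fun z _ ↦ sub_nonneg.2 (hf'' z))
  have hmin : IsMinOn φ Set.univ x := by
    refine hconv.isMinOn_of_rightDeriv_eq_zero (by simp) ?_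
    rw [(hφ x).hasDerivWithinAt.derivWithin (uniqueDiffWithinAt_Ioi x)]
    simp [φ']
  have hφy : φ x ≤ φ y := hmin (Set.mem_univ y)
  simp only [φ, sub_self] at hφy
  linarith

section SinusoidLoss

variable {ι : Type*} [Fintype ι] (a : ℝ) (c w μ : ι → ℝ)

noncomputable def sinusoidLoss (ρ : ℝ) : ℝ :=
  1 / 2 * ∑ i, w i * (a * sin (c i + ρ) - μ i) ^ 2

noncomputable def sinusoidLossDeriv (ρ : ℝ) : ℝ :=
  ∑ i, w i * ((a * sin (c i + ρ) - μ i) * (a * cos (c i + ρ)))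

noncomputable def sinusoidLossDeriv2 (ρ : ℝ) : ℝ :=
  ∑ i, w i * ((a * cos (c i + ρ)) ^ 2 - (a * sin (c i + ρ) - μ i) * (a * sin (c i + ρ)))

theorem hasDerivAt_sinusoidLoss (ρ : ℝ) :
    HasDerivAt (sinusoidLoss a c w μ) (sinusoidLossDeriv a c w μ ρ) ρ := by
  have hsin (i : ι) : HasDerivAt (fun ρ ↦ a * sin (c i + ρ) - μ i) (a * cos (c i + ρ)) ρ :=
    (((hasDerivAt_id' ρ).const_add (c i)).sin.const_mul a).sub_const (μ i) |>.congr_deriv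
      (by ring)
  have := (HasDerivAt.fun_sum fun i (_ : i ∈ univ) ↦
    ((hsin i).fun_pow 2).const_mul (w i)).const_mul (1 / 2)
  refine this.congr_deriv ?_
  rw [sinusoidLossDeriv, mul_sum]
  refine sum_congr rfl fun i _ ↦ ?_
  push_cast; ring

theorem hasDerivAt_sinusoidLossDeriv (ρ : ℝ) :
    HasDerivAt (sinusoidLossDeriv a c w μ) (sinusoidLossDeriv2 a c w μ ρ) ρ := by
  refine HasDerivAt.fun_sum fun i _ ↦ ?_
  have := (((((hasDerivAt_id' ρ).const_add (c i)).sin.const_mul a).sub_const (μ i)).fun_mul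
    (((hasDerivAt_id' ρ).const_add (c i)).cos.const_mul a)).const_mul (w i)
  exact this.congr_deriv (by ring)

theorem sq_mul_cos_sq_sub_residual_mul_sin_le {a : ℝ} (ha : 0 ≤ a) (m θ : ℝ) :
    (a * cos θ) ^ 2 - (a * sin θ - m) * (a * sin θ) ≤ a ^ 2 + a * |m| := by
  have hm : m * sin θ ≤ |m| := by
    calc m * sin θ ≤ |m * sin θ| := le_abs_self _
      _ = |m| * |sin θ| := abs_mul _ _
      _ ≤ |m| := mul_le_of_le_one_right (abs_nonneg _) (abs_sin_le_one θ)
  nlinarith [cos_sq_le_one θ, sq_nonneg (a * sin θ), mul_le_mul_of_nonneg_left hm ha,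
    mul_le_mul_of_nonneg_left (cos_sq_le_one θ) (sq_nonneg a)]

variable {a w}

theorem sinusoidLossDeriv2_le (ha : 0 ≤ a) (hw : ∀ i, 0 ≤ w i) (ρ : ℝ) :
    sinusoidLossDeriv2 a c w μ ρ ≤
      a * (a * ∑ i, w i + √(Fintype.card ι) * √(∑ i, (w i * μ i) ^ 2)) := by
  calc sinusoidLossDeriv2 a c w μ ρ ≤ ∑ i, w i * (a ^ 2 + a * |μ i|) :=
        sum_le_sum fun i _ ↦ mul_le_mul_of_nonneg_left
          (sq_mul_cos_sq_sub_residual_mul_sin_le ha _ _) (hw i)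
    _ = a * (a * ∑ i, w i + ∑ i, |w i * μ i|) := by
        simp only [abs_mul, abs_of_nonneg (hw _), mul_sum, ← sum_add_distrib]
        exact sum_congr rfl fun i _ ↦ by ring
    _ ≤ _ := by
        gcongr
        exact sum_abs_le_sqrt_card_mul_sqrt_sum_sq _

theorem sinusoidLoss_le_quadratic (ha : 0 ≤ a) (hw : ∀ i, 0 ≤ w i) (ρ₀ ρ : ℝ) :
    sinusoidLoss a c w μ ρ ≤ sinusoidLoss a c w μ ρ₀ + deriv (sinusoidLoss a c w μ) ρ₀ * (ρ - ρ₀)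
      + a * (a * ∑ i, w i + √(Fintype.card ι) * √(∑ i, (w i * μ i) ^ 2)) / 2 * (ρ - ρ₀) ^ 2 := by
  rw [(hasDerivAt_sinusoidLoss a c w μ ρ₀).deriv]
  exact le_add_mul_sub_add_sq_of_hasDerivAt2_le (hasDerivAt_sinusoidLoss a c w μ)
    (hasDerivAt_sinusoidLossDeriv a c w μ) (sinusoidLossDeriv2_le c μ ha hw) ρ₀ ρ

end SinusoidLoss

/-- Proposition 4.2 (majorization in the phase update): the convex quadratic
`g(ρ | ρ₀) = Σ_b [ f_b(ρ₀_b) + f_b'(ρ₀_b)(ρ_b − ρ₀_b) + (L_b/2)(ρ_b − ρ₀_b)² ]`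
majorizes `Σ_b f_b(ρ_b)` at the anchor point `ρ₀`. -/
theorem mm_majorization {B : ℕ} (n : Fin B → ℕ) (ω : ℝ)
    (t w μ : (b : Fin B) → Fin (n b) → ℝ)
    (a : Fin B → ℝ)
    (hw : ∀ b i, 0 < w b i) (ha : ∀ b, 0 ≤ a b)
    (f : Fin B → ℝ → ℝ)
    (hf : ∀ b ρ, f b ρ =
      (1 / 2) * ∑ i, w b i * (a b * Real.sin (ω * t b i + ρ) - μ b i) ^ 2)
    (L : Fin B → ℝ)
    (hL : ∀ b, L b = a b * (a b * (∑ i, w b i) +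
      Real.sqrt (n b) * Real.sqrt (∑ i, (w b i * μ b i) ^ 2)))
    (ρ₀ : Fin B → ℝ)
    (g : (Fin B → ℝ) → ℝ)
    (hg : ∀ ρ, g ρ = ∑ b, (f b (ρ₀ b) + deriv (f b) (ρ₀ b) * (ρ b - ρ₀ b)
        + L b / 2 * (ρ b - ρ₀ b) ^ 2)) :
    g ρ₀ = ∑ b, f b (ρ₀ b) ∧ ∀ ρ : Fin B → ℝ, ∑ b, f b (ρ b) ≤ g ρ := by
  refine ⟨by simp [hg], fun ρ ↦ ?_⟩
  rw [hg]
  refine sum_le_sum fun b _ ↦ ?_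
  have hfb : f b = sinusoidLoss (a b) (fun i ↦ ω * t b i) (w b) (μ b) := funext (hf b)
  rw [hfb, hL b]
  simpa using sinusoidLoss_le_quadratic (fun i ↦ ω * t b i) (μ b) (ha b) (fun i ↦ (hw b i).le)
    (ρ₀ b) (ρ b)
end

section
/- Let S be a nonempty closed subset of ℝ^d, let f : S → ℝ be continuous, and let ψ : S → S be a continuous map satisfying f(ψ(x)) < f(x) for all x ∈ S with ψ(x) ≠ x. Fix x₀ ∈ S and suppose the sublevel set { x ∈ S : f(x) ≤ f(x₀) } is compact. Define the iterates x_{m+1} = ψ(x_m) for m ≥ 0. Then (a) every cluster point of the sequence (x_m) is a fixed point of ψ, and (b) ‖x_{m+1} − x_m‖ → 0 as m → ∞. -/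
open Filter

/-- Theorem B.1 (Meyer's monotone convergence theorem, as stated in the paper): let
`S ⊆ ℝ^d` be nonempty and closed, `f` continuous on `S`, and `ψ : S → S` continuous on
`S` with `f(ψ(x)) < f(x)` whenever `ψ(x) ≠ x`. If the sublevel set of the starting
point is compact, then (a) every cluster point of the iterates `x_{m+1} = ψ(x_m)` is
a fixed point of `ψ`, and (b) `‖x_{m+1} − x_m‖ → 0`. -/
theorem meyer_monotone_convergence {d : ℕ}
    (S : Set (EuclideanSpace ℝ (Fin d))) (hSne : S.Nonempty) (hScl : IsClosed S)
    (f : EuclideanSpace ℝ (Fin d) → ℝ) (hf : ContinuousOn f S)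
    (ψ : EuclideanSpace ℝ (Fin d) → EuclideanSpace ℝ (Fin d))
    (hψc : ContinuousOn ψ S) (hψS : Set.MapsTo ψ S S)
    (hdesc : ∀ x ∈ S, ψ x ≠ x → f (ψ x) < f x)
    (x₀ : EuclideanSpace ℝ (Fin d)) (hx₀ : x₀ ∈ S)
    (hcpt : IsCompact {x | x ∈ S ∧ f x ≤ f x₀})
    (x : ℕ → EuclideanSpace ℝ (Fin d))
    (hx0 : x 0 = x₀) (hxrec : ∀ m : ℕ, x (m + 1) = ψ (x m)) :
    (∀ p : EuclideanSpace ℝ (Fin d), MapClusterPt p atTop x → p ∈ S ∧ ψ p = p) ∧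
      Tendsto (fun m : ℕ => ‖x (m + 1) - x m‖) atTop (nhds 0) := by
  set K : Set (EuclideanSpace ℝ (Fin d)) := {x | x ∈ S ∧ f x ≤ f x₀} with hK
  -- iterates stay in S
  have hmemS : ∀ m, x m ∈ S := by
    intro m
    induction m with
    | zero => rw [hx0]; exact hx₀
    | succ n ih => rw [hxrec]; exact hψS ih
  -- f is nonincreasing along iterates
  have hstep : ∀ m, f (x (m + 1)) ≤ f (x m) := by
    intro m
    rw [hxrec]
    by_cases h : ψ (x m) = x m
    · rw [h]
    · exact (hdesc _ (hmemS m) h).le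
  have hanti : Antitone fun m => f (x m) := antitone_nat_of_succ_le hstep
  -- iterates stay in K
  have hmemK : ∀ m, x m ∈ K := by
    intro m
    refine ⟨hmemS m, ?_⟩
    have := hanti (Nat.zero_le m)
    simpa [hx0] using this
  have hx₀K : x₀ ∈ K := by rw [← hx0]; exact hmemK 0
  -- f is bounded below on K, so f (x m) converges
  obtain ⟨z, hzK, hzmin⟩ := hcpt.exists_isMinOn ⟨x₀, hx₀K⟩
    (hf.mono fun y hy => hy.1)
  have hbdd : BddBelow (Set.range fun m => f (x m)) := by
    refine ⟨f z, ?_⟩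
    rintro r ⟨m, rfl⟩
    exact hzmin (hmemK m)
  set L := ⨅ m, f (x m) with hL
  have hfL : Tendsto (fun m => f (x m)) atTop (nhds L) :=
    tendsto_atTop_ciInf hanti hbdd
  -- key: if a subsequence converges to p, then p ∈ S and ψ p = p
  have key : ∀ (φ : ℕ → ℕ) (p : EuclideanSpace ℝ (Fin d)),
      Tendsto φ atTop atTop → Tendsto (fun n => x (φ n)) atTop (nhds p) →
      p ∈ S ∧ ψ p = p := by
    intro φ p hφ hconv
    have hpK : p ∈ K := hcpt.isClosed.mem_of_tendsto hconv
      (Eventually.of_forall fun n => hmemK (φ n))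
    have hpS : p ∈ S := hpK.1
    have hconvS : Tendsto (fun n => x (φ n)) atTop (nhdsWithin p S) := by
      rw [tendsto_nhdsWithin_iff]
      exact ⟨hconv, Eventually.of_forall fun n => hmemS (φ n)⟩
    -- f (x (φ n)) → f p, and also → L
    have h1 : Tendsto (fun n => f (x (φ n))) atTop (nhds (f p)) :=
      (hf p hpS).tendsto.comp hconvS
    have h2 : Tendsto (fun n => f (x (φ n))) atTop (nhds L) := hfL.comp hφ
    have hfp : f p = L := tendsto_nhds_unique h1 h2
    -- ψ (x (φ n)) → ψ p, with values in S, and f of it → L as well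
    have hψconv : Tendsto (fun n => ψ (x (φ n))) atTop (nhdsWithin (ψ p) S) := by
      rw [tendsto_nhdsWithin_iff]
      exact ⟨(hψc p hpS).tendsto.comp hconvS,
        Eventually.of_forall fun n => hψS (hmemS (φ n))⟩
    have h3 : Tendsto (fun n => f (ψ (x (φ n)))) atTop (nhds (f (ψ p))) :=
      (hf (ψ p) (hψS hpS)).tendsto.comp hψconv
    have hφ1 : Tendsto (fun n => φ n + 1) atTop atTop :=
      tendsto_atTop_mono (fun n => Nat.le_succ (φ n)) hφ
    have h4 : Tendsto (fun n => f (ψ (x (φ n)))) atTop (nhds L) := by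
      have h5 := hfL.comp hφ1
      simpa only [Function.comp_def, hxrec] using h5
    have hfψp : f (ψ p) = L := tendsto_nhds_unique h3 h4
    refine ⟨hpS, ?_⟩
    by_contra hne
    have := hdesc p hpS hne
    rw [hfψp, hfp] at this
    exact lt_irrefl _ this
  constructor
  · intro p hp
    obtain ⟨φ, hφmono, hφt⟩ := TopologicalSpace.FirstCountableTopology.tendsto_subseq hp
    exact key φ p hφmono.tendsto_atTop hφt
  · -- every subsequence has a sub-subsequence along which the norms go to 0
    apply tendsto_of_subseq_tendsto
    intro ns hns
    obtain ⟨p, hpK, ms, hmsmono, hms⟩ := hcpt.tendsto_subseq (fun n => hmemK (ns n))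
    refine ⟨ms, ?_⟩
    have hφ : Tendsto (fun n => ns (ms n)) atTop atTop :=
      hns.comp hmsmono.tendsto_atTop
    obtain ⟨hpS, hfix⟩ := key (fun n => ns (ms n)) p hφ hms
    have hconvS : Tendsto (fun n => x (ns (ms n))) atTop (nhdsWithin p S) := by
      rw [tendsto_nhdsWithin_iff]
      exact ⟨hms, Eventually.of_forall fun n => hmemS _⟩
    have h1 : Tendsto (fun n => x (ns (ms n) + 1)) atTop (nhds p) := by
      have : Tendsto (fun n => ψ (x (ns (ms n)))) atTop (nhds (ψ p)) :=
        (hψc p hpS).tendsto.comp hconvS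
      rw [hfix] at this
      simpa only [hxrec] using this
    have : Tendsto (fun n => x (ns (ms n) + 1) - x (ns (ms n))) atTop (nhds (p - p)) :=
      h1.sub hms
    rw [sub_self] at this
    simpa using this.norm
end
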